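/- Let Γ be a finite graph in which every vertex has degree at least 2, and let α be a fixed-point-free involution of the vertex set of Γ that preserves vertex degrees. Then there exists a vertex v of Γ such that both v and α(v) lie on cycles of Γ. Moreover, if Γ has some vertex of degree greater than 2, then v can be chosen to have degree greater than 2. -/

import Mathlib

/-- A finite multigraph: finitely many vertices and edges; each edge has an
ordered pair of endpoints (loops and multiple edges allowed). -/
structure Multigraph where
  V : Type
  E : Type
  [fintV : Fintype V]
  [fintE : Fintype E]
  [decV : DecidableEq V]
  [decE : DecidableEq E]
  ends : E → V × V

attribute [instance] Multigraph.fintV Multigraph.fintE Multigraph.decV Multigraph.decE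

namespace Multigraph

variable (G : Multigraph)

/-- The degree of a vertex; a loop at `v` contributes 2. -/
def deg (v : G.V) : ℕ :=
  (Finset.univ.filter (fun e => (G.ends e).1 = v)).card +
  (Finset.univ.filter (fun e => (G.ends e).2 = v)).card

/-- Adjacency via some edge. -/
def Adj (u w : G.V) : Prop := ∃ e, G.ends e = (u, w) ∨ G.ends e = (w, u)

/-- The graph is connected: any two vertices are joined by a walk. -/
def Connected : Prop := ∀ u w : G.V, Relation.ReflTransGen G.Adj u w

/-- A cycle (circuit / simple closed curve) in a multigraph: a cyclic sequence of
`n ≥ 1` distinct vertices joined by `n` distinct edges.  A loop (`n = 1`) and a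
pair of parallel edges (`n = 2`) are cycles. -/
structure Cycle (G : Multigraph) where
  n : ℕ
  npos : 0 < n
  v : ZMod n → G.V
  e : ZMod n → G.E
  vinj : Function.Injective v
  einj : Function.Injective e
  compat : ∀ i : ZMod n, G.ends (e i) = (v i, v (i + 1)) ∨ G.ends (e i) = (v (i + 1), v i)

/-- A vertex lies on a cycle. -/
def OnCycle (x : G.V) : Prop := ∃ (c : Cycle G) (i : ZMod c.n), c.v i = x

/-- The graph contains no cycle; equivalently every component of its underlying
space is a tree. -/
def Acyclic : Prop := IsEmpty (Cycle G)

/-- A leaf (endpoint): a vertex of degree 1. -/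
def IsLeaf (x : G.V) : Prop := G.deg x = 1

end Multigraph

/-!
Call an edge a bridge when it lies on no cycle. A vertex on no cycle meets only bridges, and the
bridges form a forest (a path of bridges never closes up). If every vertex lies on a cycle there
is nothing to prove. Otherwise the bridge forest is nonempty, and each of its leaves, having degree
at least 2 in `Γ`, also meets a cyclic edge, so it lies on a cycle and has degree at least 3. The
handshake count in a forest gives at least two more leaves than vertices of forest-degree at least
3; hence vertices of degree `> 2` on cycles strictly outnumber those off cycles, and the injective,
degree-preserving map `α` must send one of the former to a vertex on a cycle.
-/

lemma Set.injOn_Iio_succ_ite {α : Type*} {f : ℕ → α} {n : ℕ} {x : α}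
    (hf : Set.InjOn f (Set.Iio n)) (hx : ∀ j < n, f j ≠ x) :
    Set.InjOn (fun j => if j < n then f j else x) (Set.Iio (n + 1)) := by
  intro a ha b hb hab
  simp only [Set.mem_Iio] at ha hb
  by_cases han : a < n <;> by_cases hbn : b < n <;> simp only [han, hbn, if_true, if_false] at hab
  · exact hf han hbn hab
  · exact absurd hab (hx a han)
  · exact absurd hab.symm (hx b hbn)
  · omega

namespace Multigraph

open Finset

open scoped Classical

section Incidence

variable (G : Multigraph)

def Inc (e : G.E) (v : G.V) : Prop := (G.ends e).1 = v ∨ (G.ends e).2 = v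

def Joins (e : G.E) (a b : G.V) : Prop := G.ends e = (a, b) ∨ G.ends e = (b, a)

def incidence (e : G.E) (v : G.V) : ℕ :=
  (if (G.ends e).1 = v then 1 else 0) + (if (G.ends e).2 = v then 1 else 0)

def degIn (F : Finset G.E) (v : G.V) : ℕ := ∑ e ∈ F, G.incidence e v

variable {G} {e : G.E} {a b c : G.V}

lemma Joins.inc_left (h : G.Joins e a b) : G.Inc e a := by
  rcases h with h | h <;> simp [Inc, h]

lemma Joins.inc_right (h : G.Joins e a b) : G.Inc e b := by
  rcases h with h | h <;> simp [Inc, h]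

lemma Joins.eq_or_eq_of_inc (h : G.Joins e a b) (hc : G.Inc e c) : c = a ∨ c = b := by
  rcases h with h | h <;> rcases hc with hc | hc <;> simp only [h] at hc <;> tauto

lemma Inc.exists_joins (h : G.Inc e a) (hloop : (G.ends e).1 ≠ (G.ends e).2) :
    ∃ b ≠ a, G.Joins e a b := by
  rcases h with h | h
  · exact ⟨_, h ▸ hloop.symm, Or.inl (Prod.ext h rfl)⟩
  · exact ⟨_, h ▸ hloop, Or.inr (Prod.ext rfl h)⟩

lemma incidence_pos_iff : 0 < G.incidence e a ↔ G.Inc e a := by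
  unfold incidence Inc
  split_ifs <;> simp_all

lemma incidence_le_one (hloop : (G.ends e).1 ≠ (G.ends e).2) : G.incidence e a ≤ 1 := by
  unfold incidence
  split_ifs <;> simp_all

lemma incidence_eq_two_of_joins_self (h : G.Joins e a a) : G.incidence e a = 2 := by
  rcases h with h | h <;> simp [incidence, h]

lemma deg_eq_degIn_univ (v : G.V) : G.deg v = G.degIn univ v := by
  simp only [deg, degIn, incidence, card_filter, sum_add_distrib]

lemma degIn_pos_iff {F : Finset G.E} : 0 < G.degIn F a ↔ ∃ e ∈ F, G.Inc e a := by
  simp only [degIn, sum_pos_iff, incidence_pos_iff]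

lemma two_le_degIn {F : Finset G.E} {e₁ e₂ : G.E} (h₁ : e₁ ∈ F) (h₂ : e₂ ∈ F) (hne : e₁ ≠ e₂)
    (hi₁ : G.Inc e₁ a) (hi₂ : G.Inc e₂ a) : 2 ≤ G.degIn F a := by
  have := incidence_pos_iff.2 hi₁
  have := incidence_pos_iff.2 hi₂
  calc 2 ≤ G.incidence e₁ a + G.incidence e₂ a := by omega
    _ = ∑ e ∈ {e₁, e₂}, G.incidence e a := (sum_pair (f := (G.incidence · a)) hne).symm
    _ ≤ G.degIn F a := sum_le_sum_of_subset (by simp [insert_subset_iff, h₁, h₂])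

lemma sum_degIn (F : Finset G.E) : ∑ v, G.degIn F v = 2 * #F := by
  simp only [degIn]
  rw [sum_comm]
  simp [incidence, sum_add_distrib, mul_comm]

end Incidence

section Cycles

variable (G : Multigraph)

def CyclicEdge (e : G.E) : Prop := ∃ (c : G.Cycle) (i : ZMod c.n), c.e i = e

noncomputable def cyclicEdges : Finset G.E := {e | G.CyclicEdge e}

noncomputable def bridges : Finset G.E := {e | ¬ G.CyclicEdge e}

variable {G} {e : G.E} {u : G.V}

lemma cyclicEdge_of_injOn {n : ℕ} (hn : 0 < n) (w : ℕ → G.V) (f : ℕ → G.E)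
    (hw : Set.InjOn w (Set.Iio n)) (hf : Set.InjOn f (Set.Iio n))
    (hjoins : ∀ j < n, G.Joins (f j) (w j) (w ((j + 1) % n))) {j : ℕ} (hj : j < n) :
    G.CyclicEdge (f j) := by
  have : NeZero n := ⟨hn.ne'⟩
  have hval : ∀ i : ZMod n, i.val ∈ Set.Iio n := fun i => ZMod.val_lt i
  refine ⟨⟨n, hn, fun i => w i.val, fun i => f i.val, fun a b h => ZMod.val_injective n
    (hw (hval a) (hval b) h), fun a b h => ZMod.val_injective n (hf (hval a) (hval b) h),
    fun i => ?_⟩, j, ?_⟩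
  · rw [ZMod.val_add, ZMod.val_one_eq_one_mod, Nat.add_mod_mod]
    exact hjoins _ (hval i)
  · simp [ZMod.val_natCast, Nat.mod_eq_of_lt hj]

lemma cyclicEdge_of_ends_eq (h : (G.ends e).1 = (G.ends e).2) : G.CyclicEdge e :=
  cyclicEdge_of_injOn one_pos (fun _ => (G.ends e).1) (fun _ => e)
    (fun a ha b hb _ => by simp only [Set.mem_Iio] at ha hb; omega)
    (fun a ha b hb _ => by simp only [Set.mem_Iio] at ha hb; omega)
    (fun _ _ => Or.inl (Prod.ext rfl h.symm)) one_pos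

lemma ends_ne_of_not_cyclicEdge (h : ¬ G.CyclicEdge e) : (G.ends e).1 ≠ (G.ends e).2 :=
  fun h' => h (cyclicEdge_of_ends_eq h')

lemma CyclicEdge.onCycle_of_inc (he : G.CyclicEdge e) (hu : G.Inc e u) : G.OnCycle u := by
  obtain ⟨c, i, rfl⟩ := he
  rcases Joins.eq_or_eq_of_inc (c.compat i) hu with h | h
  exacts [⟨c, _, h.symm⟩, ⟨c, _, h.symm⟩]

lemma deg_eq_degIn_cyclicEdges_add_degIn_bridges (u : G.V) :
    G.deg u = G.degIn G.cyclicEdges u + G.degIn G.bridges u := by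
  rw [deg_eq_degIn_univ]
  exact (sum_filter_add_sum_filter_not _ _ _).symm

lemma degIn_cyclicEdges_eq_zero (hu : ¬ G.OnCycle u) : G.degIn G.cyclicEdges u = 0 := by
  by_contra h
  obtain ⟨e, he, hinc⟩ := degIn_pos_iff.1 (Nat.pos_of_ne_zero h)
  exact hu ((mem_filter.1 he).2.onCycle_of_inc hinc)

lemma OnCycle.two_le_degIn_cyclicEdges (hu : G.OnCycle u) : 2 ≤ G.degIn G.cyclicEdges u := by
  obtain ⟨c, i, rfl⟩ := hu
  have hmem : ∀ j, c.e j ∈ G.cyclicEdges := fun j => mem_filter.2 ⟨mem_univ _, c, j, rfl⟩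
  have hjoins : ∀ j, G.Joins (c.e j) (c.v j) (c.v (j + 1)) := c.compat
  by_cases hn : c.n = 1
  · have : Subsingleton (ZMod c.n) := by rw [hn]; infer_instance
    have hloop : c.v (i + 1) = c.v i := congrArg c.v (Subsingleton.elim _ _)
    calc 2 = G.incidence (c.e i) (c.v i) :=
          (incidence_eq_two_of_joins_self (hloop ▸ hjoins i)).symm
      _ ≤ _ := single_le_sum (f := (G.incidence · (c.v i))) (fun _ _ => Nat.zero_le _) (hmem i)
  · have : Fact (1 < c.n) := ⟨by have := c.npos; omega⟩
    have hne : c.e (i - 1) ≠ c.e i := fun h =>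
      one_ne_zero (sub_eq_self.1 (c.einj h))
    exact two_le_degIn (hmem _) (hmem _) hne
      (by simpa using (hjoins (i - 1)).inc_right) (hjoins i).inc_left

end Cycles

section Forest

variable {G : Multigraph} {B : Finset G.E} {k : ℕ} {v : ℕ → G.V} {e : ℕ → G.E}

/-- The path `v 0, e 0, v 1, …, e (k - 1), v k` with edges in `B`; the values of `v` and `e`
beyond these indices are irrelevant. -/
structure IsPathIn (B : Finset G.E) (k : ℕ) (v : ℕ → G.V) (e : ℕ → G.E) : Prop where
  injOn_vert : Set.InjOn v (Set.Iio (k + 1))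
  injOn_edge : Set.InjOn e (Set.Iio k)
  mem : ∀ j < k, e j ∈ B
  joins : ∀ j < k, G.Joins (e j) (v j) (v (j + 1))

lemma IsPathIn.succ_le_card (hp : IsPathIn B k v e) : k + 1 ≤ Fintype.card G.V := by
  simpa using card_le_card_of_injOn (s := range (k + 1)) (t := univ) v (by simp)
    (by simpa using hp.injOn_vert)

lemma IsPathIn.cyclicEdge_of_joins (hp : IsPathIn B k v e) {i : ℕ} (hi : i < k) {e' : G.E}
    (he' : ∀ j < k, e j ≠ e') (h : G.Joins e' (v k) (v i)) : G.CyclicEdge e' := by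
  have hcyc := cyclicEdge_of_injOn (n := k - i + 1) (Nat.succ_pos _) (fun t => v (i + t))
    (fun t => if t < k - i then e (i + t) else e') ?_ ?_ ?_ (j := k - i) (by omega)
  · simpa using hcyc
  · intro a ha b hb hab
    simp only [Set.mem_Iio] at ha hb
    have := hp.injOn_vert (Set.mem_Iio.2 (by omega)) (Set.mem_Iio.2 (by omega)) hab
    omega
  · refine Set.injOn_Iio_succ_ite (fun a ha b hb hab => ?_) (fun j hj => he' _ (by omega))
    simp only [Set.mem_Iio] at ha hb
    have := hp.injOn_edge (Set.mem_Iio.2 (by omega)) (Set.mem_Iio.2 (by omega)) hab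
    omega
  · intro t ht
    by_cases htk : t < k - i
    · rw [Nat.mod_eq_of_lt (by omega), if_pos htk, ← add_assoc]
      exact hp.joins _ (by omega)
    · obtain rfl : t = k - i := by omega
      rw [Nat.mod_self, if_neg htk, add_zero, Nat.add_sub_cancel' hi.le]
      exact h

lemma exists_joins_of_degIn_ne_one (hB : ∀ e ∈ B, ¬ G.CyclicEdge e) {e : G.E} (he : e ∈ B)
    {u : G.V} (hu : G.Inc e u) (hdeg : G.degIn B u ≠ 1) :
    ∃ e₂ ∈ B, e₂ ≠ e ∧ ∃ w ≠ u, G.Joins e₂ u w := by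
  have h₁ : G.incidence e u ≤ 1 := incidence_le_one (ends_ne_of_not_cyclicEdge (hB e he))
  have h₂ : 0 < G.incidence e u := incidence_pos_iff.2 hu
  have hsplit := sum_erase_add B (G.incidence · u) he
  obtain ⟨e₂, he₂, hinc⟩ := degIn_pos_iff.1 (show 0 < G.degIn (B.erase e) u by
    unfold degIn at hdeg ⊢; omega)
  obtain ⟨hne, he₂B⟩ := mem_erase.1 he₂
  exact ⟨e₂, he₂B, hne, hinc.exists_joins (ends_ne_of_not_cyclicEdge (hB e₂ he₂B))⟩

/-- A further edge at the end of the path cannot return to the path, since it would close a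
cycle through a bridge. -/
lemma IsPathIn.extend (hB : ∀ e ∈ B, ¬ G.CyclicEdge e) (hp : IsPathIn B k v e) (hk : 0 < k)
    (hvk : G.degIn B (v k) ≠ 1) : ∃ v' e', IsPathIn B (k + 1) v' e' := by
  have hlast : G.Joins (e (k - 1)) (v (k - 1)) (v k) := by
    simpa [Nat.sub_add_cancel hk] using hp.joins (k - 1) (by omega)
  obtain ⟨e₂, he₂B, hne, w, hw, hjoins⟩ :=
    exists_joins_of_degIn_ne_one hB (hp.mem _ (by omega)) hlast.inc_right hvk
  have hfresh : ∀ j < k, e j ≠ e₂ := by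
    rintro j hj rfl
    obtain rfl | hj' : j = k - 1 ∨ j < k - 1 := by omega
    · exact hne rfl
    · rcases (hp.joins j hj).eq_or_eq_of_inc hjoins.inc_left with h | h <;>
        have := hp.injOn_vert (Set.mem_Iio.2 (by omega)) (Set.mem_Iio.2 (by omega)) h <;> omega
  have hnew : ∀ j < k + 1, v j ≠ w := by
    rintro i hi rfl
    have hik : i ≠ k := fun h => hw (h ▸ rfl)
    exact hB e₂ he₂B (hp.cyclicEdge_of_joins (by omega) hfresh hjoins)
  refine ⟨fun j => if j < k + 1 then v j else w, fun j => if j < k then e j else e₂,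
    Set.injOn_Iio_succ_ite hp.injOn_vert hnew, Set.injOn_Iio_succ_ite hp.injOn_edge hfresh,
    fun j hj => ?_, fun j hj => ?_⟩
  · by_cases hjk : j < k
    · simpa [hjk] using hp.mem j hjk
    · simpa [hjk] using he₂B
  · by_cases hjk : j < k
    · simpa [hjk, show j < k + 1 by omega] using hp.joins j hjk
    · obtain rfl : j = k := by omega
      simpa using hjoins

lemma exists_degIn_eq_one (hB : ∀ e ∈ B, ¬ G.CyclicEdge e) (hne : B.Nonempty) :
    ∃ u, G.degIn B u = 1 := by
  by_contra! hleaf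
  obtain ⟨e₀, he₀⟩ := hne
  have hloop := ends_ne_of_not_cyclicEdge (hB e₀ he₀)
  have hpath : ∀ k, ∃ v e, IsPathIn B (k + 1) v e := by
    intro k
    induction k with
    | zero =>
      refine ⟨fun j => if j < 1 then (G.ends e₀).1 else (G.ends e₀).2, fun _ => e₀,
        Set.injOn_Iio_succ_ite (fun a ha b hb _ => ?_) (fun _ _ => hloop),
        fun a ha b hb _ => ?_, fun _ _ => he₀, fun j hj => ?_⟩
      · simp only [Set.mem_Iio] at ha hb; omega
      · simp only [Set.mem_Iio] at ha hb; omega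
      · obtain rfl : j = 0 := by omega
        exact Or.inl (by simp)
    | succ k ih =>
      obtain ⟨v, e, hp⟩ := ih
      exact hp.extend hB (by omega) (hleaf _)
  obtain ⟨v, e, hp⟩ := hpath (Fintype.card G.V)
  have := hp.succ_le_card
  omega

lemma card_add_one_le_card_support (hB : ∀ e ∈ B, ¬ G.CyclicEdge e) (hne : B.Nonempty) :
    #B + 1 ≤ #{u | 0 < G.degIn B u} := by
  obtain ⟨n, hn⟩ : ∃ n, #B = n := ⟨_, rfl⟩
  induction n generalizing B with
  | zero => exact absurd (card_eq_zero.1 hn) hne.ne_empty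
  | succ n ih =>
    obtain ⟨u, hu⟩ := exists_degIn_eq_one hB hne
    obtain ⟨e, he, hinc⟩ := degIn_pos_iff.1 (hu ▸ Nat.one_pos)
    have hsplit : ∀ w, G.degIn (B.erase e) w + G.incidence e w = G.degIn B w :=
      fun w => sum_erase_add B (G.incidence · w) he
    rcases (B.erase e).eq_empty_or_nonempty with hB' | hB'
    · have hloop := ends_ne_of_not_cyclicEdge (hB e he)
      have hsub : {(G.ends e).1, (G.ends e).2} ⊆ ({u | 0 < G.degIn B u} : Finset G.V) := by
        simp only [insert_subset_iff, singleton_subset_iff, mem_filter, mem_univ, true_and,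
          degIn_pos_iff]
        exact ⟨⟨e, he, Or.inl rfl⟩, ⟨e, he, Or.inr rfl⟩⟩
      have := card_le_card hsub
      rw [card_pair hloop] at this
      have := card_erase_add_one he
      rw [hB', card_empty] at this
      omega
    · have hrec := ih (fun e' he' => hB e' (mem_of_mem_erase he')) hB'
        (by rw [card_erase_of_mem he, hn, Nat.add_sub_cancel])
      have hu0 : G.degIn (B.erase e) u = 0 := by
        have := hsplit u
        have := incidence_pos_iff.2 hinc
        omega
      have hsub : ({w | 0 < G.degIn (B.erase e) w} : Finset G.V) ⊆
          ({w | 0 < G.degIn B w} : Finset G.V).erase u := by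
        intro w hw
        simp only [mem_erase, mem_filter, mem_univ, true_and] at hw ⊢
        have := hsplit w
        exact ⟨by rintro rfl; omega, by omega⟩
      have := card_le_card hsub
      rw [card_erase_of_mem (by simp [hu])] at this
      rw [card_erase_of_mem he, hn] at hrec
      omega

lemma card_three_le_degIn_add_two_le (hB : ∀ e ∈ B, ¬ G.CyclicEdge e) (hne : B.Nonempty) :
    #{u | 3 ≤ G.degIn B u} + 2 ≤ #{u | G.degIn B u = 1} := by
  have hforest := card_add_one_le_card_support hB hne
  have hsum : ∑ u, (2 * (if 0 < G.degIn B u then 1 else 0) + (if 3 ≤ G.degIn B u then 1 else 0))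
      ≤ ∑ u, (G.degIn B u + if G.degIn B u = 1 then 1 else 0) :=
    sum_le_sum fun u _ => by split_ifs <;> omega
  simp only [sum_add_distrib, ← mul_sum, ← card_filter, sum_degIn] at hsum
  omega

end Forest

section DegreeAtLeastTwo

variable {G : Multigraph} {u : G.V}

lemma bridges_nonempty_of_not_onCycle (hdeg : 2 ≤ G.deg u) (hu : ¬ G.OnCycle u) :
    G.bridges.Nonempty := by
  have hsplit := deg_eq_degIn_cyclicEdges_add_degIn_bridges u
  rw [degIn_cyclicEdges_eq_zero hu] at hsplit
  obtain ⟨e, he, -⟩ := degIn_pos_iff.1 (show 0 < G.degIn G.bridges u by omega)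
  exact ⟨e, he⟩

/-- Having degree at least 2 but only one bridge, `u` meets a cyclic edge, hence two of them. -/
lemma onCycle_and_two_lt_deg_of_degIn_bridges_eq_one (hdeg : 2 ≤ G.deg u)
    (hleaf : G.degIn G.bridges u = 1) : G.OnCycle u ∧ 2 < G.deg u := by
  have hsplit := deg_eq_degIn_cyclicEdges_add_degIn_bridges u
  have hu : G.OnCycle u := by
    by_contra hu
    rw [degIn_cyclicEdges_eq_zero hu] at hsplit
    omega
  exact ⟨hu, by have := hu.two_le_degIn_cyclicEdges; omega⟩

lemma card_offCycle_add_two_le (hdeg : ∀ v, 2 ≤ G.deg v) (hne : G.bridges.Nonempty) :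
    #{u | ¬ G.OnCycle u ∧ 2 < G.deg u} + 2 ≤ #{u | G.OnCycle u ∧ 2 < G.deg u} :=
  calc #{u | ¬ G.OnCycle u ∧ 2 < G.deg u} + 2 ≤ #{u | 3 ≤ G.degIn G.bridges u} + 2 := by
        gcongr with u
        intro hu
        have hsplit := deg_eq_degIn_cyclicEdges_add_degIn_bridges u
        rw [degIn_cyclicEdges_eq_zero hu.1] at hsplit
        omega
    _ ≤ #{u | G.degIn G.bridges u = 1} :=
        card_three_le_degIn_add_two_le (fun _ he => (mem_filter.1 he).2) hne
    _ ≤ #{u | G.OnCycle u ∧ 2 < G.deg u} := by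
        gcongr with u
        exact onCycle_and_two_lt_deg_of_degIn_bridges_eq_one (hdeg u)

lemma exists_onCycle_map_onCycle (hdeg : ∀ v, 2 ≤ G.deg v) (hne : G.bridges.Nonempty)
    {α : G.V → G.V} (hα : Function.Injective α) (hpres : ∀ v, G.deg (α v) = G.deg v) :
    ∃ v, G.OnCycle v ∧ G.OnCycle (α v) ∧ 2 < G.deg v := by
  by_contra! h
  have hmaps : Set.MapsTo α ({u | G.OnCycle u ∧ 2 < G.deg u} : Finset G.V)
      ({u | ¬ G.OnCycle u ∧ 2 < G.deg u} : Finset G.V) := by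
    intro v hv
    simp only [coe_filter, mem_univ, true_and, Set.mem_ofPred_eq, hpres] at hv ⊢
    exact ⟨fun hαv => (h v hv.1 hαv).not_gt hv.2, hv.2⟩
  have := card_le_card_of_injOn α hmaps hα.injOn
  have := card_offCycle_add_two_le hdeg hne
  omega

end DegreeAtLeastTwo

end Multigraph

theorem involution_onCycle_general (Γ : Multigraph) [Nonempty Γ.V]
    (hdeg : ∀ v : Γ.V, 2 ≤ Γ.deg v)
    (α : Γ.V → Γ.V) (hinv : ∀ v, α (α v) = v)
    (hpres : ∀ v, Γ.deg (α v) = Γ.deg v) :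
    ∃ v : Γ.V, Γ.OnCycle v ∧ Γ.OnCycle (α v) ∧
      ((∃ w : Γ.V, 2 < Γ.deg w) → 2 < Γ.deg v) := by
  by_cases hall : ∀ u, Γ.OnCycle u
  · by_cases hbig : ∃ w, 2 < Γ.deg w
    · obtain ⟨w, hw⟩ := hbig
      exact ⟨w, hall w, hall (α w), fun _ => hw⟩
    · obtain ⟨v⟩ := ‹Nonempty Γ.V›
      exact ⟨v, hall v, hall (α v), fun h => absurd h hbig⟩
  · obtain ⟨u, hu⟩ := not_forall.1 hall
    obtain ⟨v, hv, hαv, hdv⟩ := Multigraph.exists_onCycle_map_onCycle hdeg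
      (Multigraph.bridges_nonempty_of_not_onCycle (hdeg u) hu)
      (Function.LeftInverse.injective hinv) hpres
    exact ⟨v, hv, hαv, fun _ => hdv⟩

/-- If every vertex of a finite graph Γ has degree ≥ 2 and α is a
fixed-point-free, degree-preserving involution of the vertex set, then some vertex v
is such that both v and α(v) lie on cycles of Γ; moreover if Γ has a vertex of
degree > 2, then v can be chosen of degree > 2. -/
theorem involution_onCycle (Γ : Multigraph) [Nonempty Γ.V]
    (hdeg : ∀ v : Γ.V, 2 ≤ Γ.deg v)
    (α : Γ.V → Γ.V) (hinv : ∀ v, α (α v) = v) (hfix : ∀ v, α v ≠ v)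
    (hpres : ∀ v, Γ.deg (α v) = Γ.deg v) :
    ∃ v : Γ.V, Γ.OnCycle v ∧ Γ.OnCycle (α v) ∧
      ((∃ w : Γ.V, 2 < Γ.deg w) → 2 < Γ.deg v) :=
  involution_onCycle_general Γ hdeg α hinv hpres
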